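/- Let X, Y be finite non-trivial metric spaces of equal cardinality with a bijection f : X → Y, and let Δ denote an optimal metric decomposition error, i.e., ||Δ||_∞ = min over s ≥ 0 of ||D_Y − s·D_X||_∞. Then d_N(X, Y) ≤ 2·||Δ||_∞ / diam(Y). -/

import Mathlib

noncomputable def maxnorm {n : ℕ} (M : Fin n → Fin n → ℝ) : ℝ :=
  sSup (Set.range fun p : Fin n × Fin n => |M p.1 p.2|)

def IsMetricD {n : ℕ} (d : Fin n → Fin n → ℝ) : Prop :=
  (∀ i, d i i = 0) ∧ (∀ i j, d i j = d j i) ∧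
  (∀ i j k, d i k ≤ d i j + d j k) ∧ (∀ i j, i ≠ j → 0 < d i j)

noncomputable def diamD {n : ℕ} (d : Fin n → Fin n → ℝ) : ℝ :=
  sSup (Set.range fun p : Fin n × Fin n => d p.1 p.2)

/-- Sup-norm distance between two points of the plane. -/
noncomputable def supDist (p q : ℝ × ℝ) : ℝ := max |p.1 - q.1| |p.2 - q.2|

/-- Distance from a point to the diagonal (in the sup norm). -/
noncomputable def diagCost (p : ℝ × ℝ) : ℝ := (p.2 - p.1) / 2

/-- A partial matching between the off-diagonal points of two persistence diagrams;
unmatched points are implicitly matched to the diagonal. -/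
def IsMatching (A B : Finset (ℝ × ℝ)) (M : Finset ((ℝ × ℝ) × (ℝ × ℝ))) : Prop :=
  (∀ pq ∈ M, pq.1 ∈ A ∧ pq.2 ∈ B) ∧
  (∀ pq ∈ M, ∀ pq' ∈ M, pq.1 = pq'.1 → pq = pq') ∧
  (∀ pq ∈ M, ∀ pq' ∈ M, pq.2 = pq'.2 → pq = pq')

/-- Cost of a matching: the largest sup-norm displacement, where unmatched
points are sent to the diagonal. -/
noncomputable def matchCost (A B : Finset (ℝ × ℝ)) (M : Finset ((ℝ × ℝ) × (ℝ × ℝ))) : ℝ :=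
  sSup ({0} ∪ ((fun pq : (ℝ × ℝ) × (ℝ × ℝ) => supDist pq.1 pq.2) '' (M : Set ((ℝ × ℝ) × (ℝ × ℝ))))
    ∪ (diagCost '' {p | p ∈ A ∧ ∀ pq ∈ M, pq.1 ≠ p})
    ∪ (diagCost '' {q | q ∈ B ∧ ∀ pq ∈ M, pq.2 ≠ q}))

/-- Bottleneck distance between two persistence diagrams (finite multisets of
off-diagonal points, with the diagonal implicitly available with infinite multiplicity). -/
noncomputable def dB (A B : Finset (ℝ × ℝ)) : ℝ :=
  sInf ((matchCost A B) '' {M | IsMatching A B M})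

/-- Scaling of a persistence diagram: `sA = {s·a : a ∈ A}`. -/
noncomputable def scaleD (s : ℝ) (A : Finset (ℝ × ℝ)) : Finset (ℝ × ℝ) :=
  A.image fun p => (s * p.1, s * p.2)

/-- Normalized bottleneck distance: bottleneck distance between the Vietoris-Rips
persistence diagrams of the diameter-normalized metric spaces. -/
noncomputable def dN (dgm : (n : ℕ) → (Fin n → Fin n → ℝ) → Finset (ℝ × ℝ))
    {n m : ℕ} (dX : Fin n → Fin n → ℝ) (dY : Fin m → Fin m → ℝ) : ℝ :=
  dB (dgm n fun i j => dX i j / diamD dX) (dgm m fun i j => dY i j / diamD dY)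


lemma entry_le_maxnorm {n : ℕ} (M : Fin n → Fin n → ℝ) (i j : Fin n) :
    |M i j| ≤ maxnorm M :=
  le_csSup (Set.finite_range _).bddAbove ⟨(i, j), rfl⟩

lemma maxnorm_le' {n : ℕ} (hn : 0 < n) (M : Fin n → Fin n → ℝ) {c : ℝ}
    (h : ∀ i j, |M i j| ≤ c) : maxnorm M ≤ c := by
  haveI : NeZero n := ⟨hn.ne'⟩
  exact csSup_le (Set.range_nonempty _) (by rintro x ⟨p, rfl⟩; exact h p.1 p.2)

lemma le_diamD {n : ℕ} (d : Fin n → Fin n → ℝ) (i j : Fin n) : d i j ≤ diamD d :=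
  le_csSup (Set.finite_range _).bddAbove ⟨(i, j), rfl⟩

lemma exists_diamD {n : ℕ} (hn : 0 < n) (d : Fin n → Fin n → ℝ) :
    ∃ i j, d i j = diamD d := by
  haveI : NeZero n := ⟨hn.ne'⟩
  have h := (Set.range_nonempty (fun p : Fin n × Fin n => d p.1 p.2)).csSup_mem
    (Set.finite_range _)
  obtain ⟨p, hp⟩ := h
  exact ⟨p.1, p.2, hp⟩

lemma isMetricD_nonneg {n : ℕ} {d : Fin n → Fin n → ℝ} (h : IsMetricD d) (i j : Fin n) :
    0 ≤ d i j := by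
  rcases eq_or_ne i j with rfl | hij
  · exact (h.1 i).ge
  · exact (h.2.2.2 i j hij).le

lemma isMetricD_div {n : ℕ} {d : Fin n → Fin n → ℝ} (h : IsMetricD d) {c : ℝ} (hc : 0 < c) :
    IsMetricD (fun i j => d i j / c) := by
  obtain ⟨h0, hs, ht, hp⟩ := h
  refine ⟨fun i => by simp [h0], fun i j => by simp [hs i j], fun i j k => ?_,
    fun i j hij => div_pos (hp i j hij) hc⟩
  rw [← add_div]
  exact (div_le_div_iff_of_pos_right hc).mpr (ht i j k)

lemma key_pointwise (a b DX DY s Δ : ℝ) (ha0 : 0 ≤ a) (haD : a ≤ DX)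
    (hb0 : 0 ≤ b) (hbD : b ≤ DY) (hDX : 0 < DX) (hDY : 0 < DY)
    (hs : 0 ≤ s) (hΔ : 0 ≤ Δ)
    (h1 : |b - s * a| ≤ Δ) (h2 : DY ≤ s * DX + Δ) (h3 : s * DX ≤ DY + Δ) :
    |a / DX - b / DY| ≤ 2 * Δ / DY := by
  rw [abs_le] at h1
  have hpos : 0 < DX * DY := mul_pos hDX hDY
  have key1 : |a * DY - b * DX| ≤ 2 * Δ * DX := by
    rw [abs_le]
    have t1 : a * DY ≤ a * (s * DX + Δ) := mul_le_mul_of_nonneg_left h2 ha0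
    have t2 : s * a ≤ b + Δ := by linarith
    have t3 : s * a * DX ≤ (b + Δ) * DX := mul_le_mul_of_nonneg_right t2 hDX.le
    have t4 : a * Δ ≤ DX * Δ := mul_le_mul_of_nonneg_right haD hΔ
    have t5 : b ≤ s * a + Δ := by linarith
    have t6 : b * DX ≤ (s * a + Δ) * DX := mul_le_mul_of_nonneg_right t5 hDX.le
    have t7 : a * (s * DX) ≤ a * (DY + Δ) := mul_le_mul_of_nonneg_left h3 ha0
    constructor <;> nlinarith
  have e1 : a / DX - b / DY = (a * DY - b * DX) / (DX * DY) := by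
    field_simp
  have e2 : 2 * Δ / DY = (2 * Δ * DX) / (DX * DY) := by
    field_simp
  rw [e1, e2, abs_div, abs_of_pos hpos]
  gcongr


/-- Stability of the normalized bottleneck distance:
`d_N(X, Y) ≤ 2‖Δ‖_∞ / diam(Y)` where `‖Δ‖_∞` is the optimal metric
decomposition error. -/
theorem stmt9 (dgm : (n : ℕ) → (Fin n → Fin n → ℝ) → Finset (ℝ × ℝ))
    (hstab : ∀ (n : ℕ) (d e : Fin n → Fin n → ℝ), IsMetricD d → IsMetricD e →
      dB (dgm n d) (dgm n e) ≤ maxnorm (fun i j => d i j - e i j))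
    {n : ℕ} (dX dY : Fin n → Fin n → ℝ)
    (hX : IsMetricD dX) (hY : IsMetricD dY)
    (hdX : 0 < diamD dX) (hdY : 0 < diamD dY)
    (Δnorm : ℝ)
    (hΔ : IsLeast {c : ℝ | ∃ s : ℝ, 0 ≤ s ∧
            c = maxnorm (fun i j => dY i j - s * dX i j)} Δnorm) :
    dN dgm dX dY ≤ 2 * Δnorm / diamD dY := by
  rcases Nat.eq_zero_or_pos n with h0 | hn
  · exfalso
    subst h0
    have he : (Set.range fun p : Fin 0 × Fin 0 => dX p.1 p.2) = ∅ := Set.range_eq_empty _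
    have : diamD dX = 0 := by rw [diamD, he, Real.sSup_empty]
    linarith
  obtain ⟨hmem, hlb⟩ := hΔ
  obtain ⟨s, hs0, hsΔ⟩ := hmem
  set DX := diamD dX with hDXdef
  set DY := diamD dY with hDYdef
  have h1 : ∀ i j, |dY i j - s * dX i j| ≤ Δnorm := by
    intro i j
    rw [hsΔ]
    exact entry_le_maxnorm (fun i j => dY i j - s * dX i j) i j
  have hΔ0 : 0 ≤ Δnorm := by
    have i0 : Fin n := ⟨0, hn⟩
    exact (abs_nonneg _).trans (h1 i0 i0)
  have h2 : DY ≤ s * DX + Δnorm := by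
    obtain ⟨i0, j0, hij⟩ := exists_diamD hn dY
    have := h1 i0 j0
    rw [abs_le] at this
    have hx : s * dX i0 j0 ≤ s * DX := mul_le_mul_of_nonneg_left (le_diamD dX i0 j0) hs0
    linarith [this.2, hij ▸ this.2]
  have h3 : s * DX ≤ DY + Δnorm := by
    obtain ⟨i1, j1, hij⟩ := exists_diamD hn dX
    have := h1 i1 j1
    rw [abs_le] at this
    have hy : dY i1 j1 ≤ DY := le_diamD dY i1 j1
    have : s * DX = s * dX i1 j1 := by rw [hij]
    rw [this]
    have h1' := (abs_le.mp (h1 i1 j1)).1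
    linarith
  have hX' : IsMetricD (fun i j => dX i j / DX) := isMetricD_div hX hdX
  have hY' : IsMetricD (fun i j => dY i j / DY) := isMetricD_div hY hdY
  refine le_trans (hstab n _ _ hX' hY') ?_
  refine maxnorm_le' hn _ (fun i j => ?_)
  exact key_pointwise (dX i j) (dY i j) DX DY s Δnorm
    (isMetricD_nonneg hX i j) (le_diamD dX i j)
    (isMetricD_nonneg hY i j) (le_diamD dY i j)
    hdX hdY hs0 hΔ0 (h1 i j) h2 h3
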